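/- arXiv:1102.5601 — 3 statements merged into one kernel-verified Lean document; each statement's English description precedes it below -/
import Mathlib

section
/- Let v, k, θ, τ be real numbers with v > 4, k > θ ≥ 1, 0 > τ, k + θτ > 0 and v = (k-θ)(k-τ)/(k+θτ). Set α = v(θ+τ+1)+(θ+τ)², β = v + v(1+θ+τ)² - 2θ² - 2θτ - 2τ², and Δ = α² + 4θτ(β + 2θτ). If θ + τ ≥ 1 and Δ ≥ 0, then both roots s of the quadratic -θτ·s² + α·s + (β + 2θτ) = 0 satisfy s < -2. -/
set_option maxHeartbeats 1000000 in
theorem hBlem (v k θ τ : ℝ)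
    (hv : v > 4) (hkθ : k > θ) (hθ : θ ≥ 1) (hτ : 0 > τ) (hc : k + θ * τ > 0)
    (hvc : v * (k + θ * τ) = (k - θ) * (k - τ))
    (hsum : θ + τ ≥ 1) :
    v * (θ + τ + 1) + (θ + τ) ^ 2 + 4 * (θ * τ) > 0 := by
  set G := v * (θ + τ + 1) + (θ + τ) ^ 2 + 4 * (θ * τ) with hG
  rcases lt_or_ge (-25/24 : ℝ) τ with h1 | h1
  · have key : (25/24 + τ) * θ ≥ 0 :=
      mul_nonneg (by linarith) (by linarith)
    nlinarith [mul_pos (by linarith : v - 4 > 0) (by linarith : θ + τ + 1 > 0),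
      sq_nonneg (θ + τ - 1)]
  · have hτ1 : τ ≤ -1 := by linarith
    have hnt : (0:ℝ) ≤ -(θ * τ) := by nlinarith
    have hP0 : θ * τ * (1 + θ) * (1 + τ) ≥ 0 := by
      nlinarith [mul_nonneg (mul_nonneg hnt (by linarith : (0:ℝ) ≤ 1 + θ))
        (by linarith : (0:ℝ) ≤ -(1 + τ))]
    have hGc : G * (k + θ * τ) =
        (θ + τ + 1) * ((k - θ) * (k - τ)) + (k + θ * τ) * ((θ + τ) ^ 2 + 4 * (θ * τ)) := by
      rw [hG]; linear_combination (θ + τ + 1) * hvc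
    have hid : (θ + τ + 1) * ((k - θ) * (k - τ)) + (k + θ * τ) * ((θ + τ) ^ 2 + 4 * (θ * τ)) =
        (θ + τ + 1) * (k + θ * τ) ^ 2 +
          (-(θ + τ) - 2 * (θ * τ) * (θ + τ - 1)) * (k + θ * τ) +
          (θ + τ + 1) * (θ * τ * (1 + θ) * (1 + τ)) := by ring
    have hFpos : G * (k + θ * τ) > 0 := by
      rw [hGc, hid]
      rcases le_or_gt 2 (θ + τ) with h2 | h2
      · have hstep : θ * (-τ) - (θ + τ + 1) ≥ 0 := by
          nlinarith [mul_nonneg (by linarith : (0:ℝ) ≤ θ) (by linarith : (0:ℝ) ≤ -τ - 1)]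
        have hm : -(θ + τ) - 2 * (θ * τ) * (θ + τ - 1) > 0 := by
          nlinarith [mul_nonneg hstep (by linarith : θ + τ - 1 ≥ 0), sq_nonneg (θ + τ - 2)]
        nlinarith [mul_pos (by linarith : θ + τ + 1 > 0) (mul_pos hc hc),
          mul_pos hm hc, mul_nonneg (by linarith : θ + τ + 1 ≥ 0) hP0]
      · have hθ49 : θ ≥ 49/24 := by linarith
        have hθq : θ * (-τ) ≥ 49/24 * (25/24) := by nlinarith
        have ha2 : (1 + θ) * (-1 - τ) ≥ (73/24) * (1/24) := by nlinarith
        have hpos1 : (0:ℝ) ≤ (73/24) * (1/24) := by norm_num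
        have hpos2 : (0:ℝ) ≤ θ * (-τ) := by nlinarith
        have hP : θ * τ * (1 + θ) * (1 + τ) ≥ 13/50 := by
          nlinarith [mul_le_mul hθq ha2 hpos1 hpos2]
        have t1 : (θ + τ + 1) * (k + θ * τ) ^ 2 ≥ 2 * (k + θ * τ) ^ 2 := by
          nlinarith [mul_nonneg (by linarith : (0:ℝ) ≤ θ + τ - 1) (sq_nonneg (k + θ * τ))]
        have hm2 : -(θ + τ) - 2 * (θ * τ) * (θ + τ - 1) ≥ -2 := by
          nlinarith [mul_nonneg hnt (by linarith : (0:ℝ) ≤ θ + τ - 1)]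
        have t2 : (-(θ + τ) - 2 * (θ * τ) * (θ + τ - 1)) * (k + θ * τ) ≥ -2 * (k + θ * τ) := by
          nlinarith [mul_nonneg (by linarith : (0:ℝ) ≤ -(θ + τ) - 2 * (θ * τ) * (θ + τ - 1) + 2) hc.le]
        have t3 : (θ + τ + 1) * (θ * τ * (1 + θ) * (1 + τ)) ≥ 2 * (13/50) := by
          nlinarith [mul_nonneg (by linarith : (0:ℝ) ≤ θ + τ - 1) hP0]
        nlinarith [t1, t2, t3, sq_nonneg (2 * (k + θ * τ) - 1)]
    by_contra hcon
    push_neg at hcon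
    nlinarith [hFpos, mul_nonneg (neg_nonneg.2 hcon) hc.le]

theorem stmt_0 (v k θ τ α β Δ : ℝ)
    (hv : v > 4) (hkθ : k > θ) (hθ : θ ≥ 1) (hτ : 0 > τ) (hc : k + θ * τ > 0)
    (hveq : v = (k - θ) * (k - τ) / (k + θ * τ))
    (hα : α = v * (θ + τ + 1) + (θ + τ) ^ 2)
    (hβ : β = v + v * (1 + θ + τ) ^ 2 - 2 * θ ^ 2 - 2 * θ * τ - 2 * τ ^ 2)
    (hΔ : Δ = α ^ 2 + 4 * θ * τ * (β + 2 * θ * τ))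
    (hsum : θ + τ ≥ 1) (hΔ0 : Δ ≥ 0) :
    ∀ s : ℝ, -(θ * τ) * s ^ 2 + α * s + (β + 2 * θ * τ) = 0 → s < -2 := by
  have hvc : v * (k + θ * τ) = (k - θ) * (k - τ) := by
    rw [hveq]; field_simp
  have hA : -(θ * τ) > 0 := by nlinarith
  have hB : α + 4 * (θ * τ) > 0 := by
    have := hBlem v k θ τ hv hkθ hθ hτ hc hvc hsum
    linarith [hα ▸ le_refl α, this]
  have hC : -(θ * τ) * 4 + α * (-2) + (β + 2 * θ * τ) = (v - 4) * (θ + τ) ^ 2 := by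
    rw [hα, hβ]; ring
  have hCpos : (v - 4) * (θ + τ) ^ 2 > 0 := by
    apply mul_pos (by linarith)
    positivity
  intro s hs
  by_contra h
  push_neg at h
  have ht : s + 2 ≥ 0 := by linarith
  have hq2 : -(θ * τ) * (s + 2) ^ 2 + (α + 4 * (θ * τ)) * (s + 2) +
      ((v - 4) * (θ + τ) ^ 2) = 0 := by
    rw [← hC]; linear_combination hs
  have h1 : -(θ * τ) * (s + 2) ^ 2 ≥ 0 := mul_nonneg hA.le (sq_nonneg _)
  have h2 : (α + 4 * (θ * τ)) * (s + 2) ≥ 0 := mul_nonneg hB.le ht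
  linarith
end

section
/- Let θ ≥ 1 be an integer, and let h be an integer with 0 ≤ h ≤ 2θ+1. Define v = (2θ²+h)(2θ²+2θ+1+h)/(θ²+h). Then v = 4θ²+4θ+2 + h(h-2θ-1)/(θ²+h), and v is an integer if and only if h ∈ {0, θ, 2θ+1}. -/
theorem stmt_5 (θ h : ℤ) (hθ : θ ≥ 1) (h0 : 0 ≤ h) (h1 : h ≤ 2 * θ + 1)
    (v : ℚ) (hv : v = ((2 * θ ^ 2 + h : ℤ) : ℚ) * ((2 * θ ^ 2 + 2 * θ + 1 + h : ℤ) : ℚ) /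
      ((θ ^ 2 + h : ℤ) : ℚ)) :
    v = ((4 * θ ^ 2 + 4 * θ + 2 : ℤ) : ℚ) +
        ((h * (h - 2 * θ - 1) : ℤ) : ℚ) / ((θ ^ 2 + h : ℤ) : ℚ) ∧
    ((∃ m : ℤ, v = (m : ℚ)) ↔ h = 0 ∨ h = θ ∨ h = 2 * θ + 1) := by
  have hd : (0 : ℤ) < θ ^ 2 + h := by nlinarith
  have hdq : ((θ ^ 2 + h : ℤ) : ℚ) ≠ 0 := by exact_mod_cast hd.ne'
  constructor
  · rw [hv]; field_simp; push_cast; ring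
  constructor
  · rintro ⟨m, hm⟩
    have hint : m * (θ ^ 2 + h) = (2 * θ ^ 2 + h) * (2 * θ ^ 2 + 2 * θ + 1 + h) := by
      have : (m : ℚ) * ((θ ^ 2 + h : ℤ) : ℚ)
          = ((2 * θ ^ 2 + h : ℤ) : ℚ) * ((2 * θ ^ 2 + 2 * θ + 1 + h : ℤ) : ℚ) := by
        rw [← hm, hv]; field_simp
      exact_mod_cast this
    by_contra hc
    push_neg at hc
    obtain ⟨hc0, hcθ, hc1⟩ := hc
    have hpos : (0 : ℤ) < h * (2 * θ + 1 - h) := by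
      have : 0 < h := lt_of_le_of_ne h0 (Ne.symm hc0)
      have : h < 2 * θ + 1 := lt_of_le_of_ne h1 hc1
      nlinarith [lt_of_le_of_ne h0 (Ne.symm hc0)]
    have hdvd : (θ ^ 2 + h) ∣ h * (2 * θ + 1 - h) := by
      refine ⟨4 * θ ^ 2 + 4 * θ + 2 - m, ?_⟩
      nlinarith [hint]
    have hle : θ ^ 2 + h ≤ h * (2 * θ + 1 - h) := Int.le_of_dvd hpos hdvd
    have : (θ - h) ^ 2 ≤ 0 := by nlinarith
    have : θ = h := by nlinarith
    exact hcθ this.symm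
  · rintro (rfl | rfl | rfl)
    · exact ⟨4 * θ ^ 2 + 4 * θ + 2, by rw [hv]; field_simp; push_cast; ring⟩
    · exact ⟨4 * h ^ 2 + 4 * h + 1, by rw [hv]; field_simp; push_cast; ring⟩
    · exact ⟨4 * θ ^ 2 + 4 * θ + 2, by rw [hv]; field_simp; push_cast; ring⟩
end

section
/- Let n ≥ 2 and δ be integers and set θ = (δ + √(δ² + 4(n-1)))/2. If δ ≤ -2 then n² - 16(1+θ)² ≥ n(n - 16); in particular, if in addition n ≥ 17, then n² > 16(1+θ)². -/
theorem stmt_12 (n δ : ℤ) (hn : n ≥ 2) (θ : ℝ)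
    (hθ : θ = ((δ : ℝ) + Real.sqrt ((δ : ℝ) ^ 2 + 4 * ((n : ℝ) - 1))) / 2)
    (hδ : δ ≤ -2) :
    (n : ℝ) ^ 2 - 16 * (1 + θ) ^ 2 ≥ (n : ℝ) * ((n : ℝ) - 16) ∧
    (n ≥ 17 → (n : ℝ) ^ 2 > 16 * (1 + θ) ^ 2) := by
  have hn' : (2 : ℝ) ≤ (n : ℝ) := by exact_mod_cast hn
  have hδ' : (δ : ℝ) ≤ -2 := by exact_mod_cast hδ
  set s := Real.sqrt ((δ : ℝ) ^ 2 + 4 * ((n : ℝ) - 1)) with hs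
  have harg : (0 : ℝ) ≤ (δ : ℝ) ^ 2 + 4 * ((n : ℝ) - 1) := by nlinarith [sq_nonneg ((δ : ℝ))]
  have hsq : s ^ 2 = (δ : ℝ) ^ 2 + 4 * ((n : ℝ) - 1) := Real.sq_sqrt harg
  have hsnn : 0 ≤ s := Real.sqrt_nonneg _
  have hsge : -(δ : ℝ) ≤ s := by
    have : Real.sqrt ((δ : ℝ) ^ 2) ≤ s := Real.sqrt_le_sqrt (by nlinarith)
    have h2 : Real.sqrt ((δ : ℝ) ^ 2) = |(δ : ℝ)| := by
      rw [Real.sqrt_sq_eq_abs]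
    calc -(δ : ℝ) ≤ |(δ : ℝ)| := neg_le_abs _
      _ ≤ s := h2 ▸ this
  have hθnn : 0 ≤ θ := by rw [hθ]; linarith
  have hθeq : θ ^ 2 = (δ : ℝ) * θ + ((n : ℝ) - 1) := by
    rw [hθ]; field_simp; nlinarith [hsq]
  have hkey : (1 + θ) ^ 2 ≤ (n : ℝ) := by nlinarith [mul_nonneg hθnn (by linarith : (0:ℝ) ≤ -(δ:ℝ) - 2)]
  constructor
  · nlinarith
  · intro h17
    have : (17 : ℝ) ≤ (n : ℝ) := by exact_mod_cast h17
    nlinarith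
end
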